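/- arXiv:0809.3476 — 3 statements merged into one kernel-verified Lean document; each statement's English description precedes it below -/
import Mathlib

section
/- Every factor in a minimal factorization of the n-cycle (1 2 … n) is an increasing cycle; that is, if σ = (s_1 s_2 … s_k) is a cycle appearing as a factor in a factorization σ_m ⋯ σ_1 = (1 2 … n) with ∑_{i=1}^m (|σ_i| − 1) = n − 1, then s_1 < s_2 < … < s_k (where s_1 is the smallest element of the cycle). -/
/-- A permutation is an increasing cycle if it is the cyclic permutation
`(s_1 s_2 … s_k)` (mapping each entry to the next, the last to the first)
for a strictly increasing list `s_1 < s_2 < … < s_k`. -/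
def IsIncreasingCycle {n : ℕ} (σ : Equiv.Perm (Fin n)) : Prop :=
  ∃ s : List (Fin n), s.Pairwise (· < ·) ∧ σ = s.formPerm

/-!
Let `c = finRotate n` and `ρ = σ⁻¹ * c`. Left multiplication by `π` merges at most
`|supp π|` orbits into one, so it lowers the number of orbits (fixed points included) by at
most `|supp π| - 1`. Deleting `σ` from a minimal factorization and conjugating the factors to
its left by `σ⁻¹` writes `ρ` as a product of total weight `n - |supp σ|`, so `ρ` has at least
`|supp σ|` orbits. An orbit of `ρ` avoiding `supp σ` would be an orbit of `c = σ * ρ`, i.e. all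
of `Fin n`; hence every orbit of `ρ` contains exactly one point of `supp σ`. From
`x ∈ supp σ`, `ρ` walks through `x + 1, x + 2, …` until the first point `y ∈ supp σ` after `x`
in cyclic order, and then moves to `σ⁻¹ y ∈ supp σ`. So `σ⁻¹ y = x`: `σ` sends every point of
its support to the next one in cyclic order, which is what the increasing cycle does.
-/

open Finset Fin.NatCast

namespace Equiv.Perm

variable {α : Type*}

lemma pow_apply_eq_of_forall_sameCycle {g h : Perm α} {x : α}
    (hgh : ∀ y, g.SameCycle x y → h y = g y) (i : ℕ) : (h ^ i) x = (g ^ i) x := by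
  induction i with
  | zero => rfl
  | succ i ih =>
    rw [pow_succ', mul_apply, ih, hgh _ (sameCycle_pow_right.2 (SameCycle.refl _ _)),
      ← mul_apply, ← pow_succ']

variable [Fintype α] [DecidableEq α]

lemma inv_mul_pow_apply {σ c : Perm α} {x : α} {d : ℕ} (hd : 0 < d)
    (h : ∀ j, 0 < j → j < d → (c ^ j) x ∉ σ.support) :
    ((σ⁻¹ * c) ^ d) x = σ⁻¹ ((c ^ d) x) := by
  induction d, hd using Nat.le_induction with
  | base => rfl
  | succ d hd ih =>
    have hfix : σ⁻¹ ((c ^ d) x) = (c ^ d) x :=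
      notMem_support.1 (by rw [support_inv]; exact h d hd (by omega))
    rw [pow_succ', mul_apply, ih (fun j hj hjd => h j hj (by omega)), hfix, mul_apply,
      ← mul_apply c, ← pow_succ']

def orbitFinset (g : Perm α) (x : α) : Finset α := {y | g.SameCycle x y}

def orbits (g : Perm α) : Finset (Finset α) := univ.image g.orbitFinset

@[simp]
lemma mem_orbitFinset {g : Perm α} {x y : α} : y ∈ g.orbitFinset x ↔ g.SameCycle x y := by
  simp [orbitFinset]

lemma orbitFinset_eq_orbitFinset_iff {g : Perm α} {x y : α} :
    g.orbitFinset x = g.orbitFinset y ↔ g.SameCycle x y := by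
  refine ⟨fun h => ?_, fun h => ?_⟩
  · rw [← mem_orbitFinset, h, mem_orbitFinset]
  · ext z
    simp only [mem_orbitFinset]
    exact ⟨h.symm.trans, h.trans⟩

lemma orbitFinset_mem_orbits (g : Perm α) (x : α) : g.orbitFinset x ∈ g.orbits :=
  mem_image_of_mem _ (mem_univ x)

lemma card_orbits_one : (orbits (1 : Perm α)).card = Fintype.card α := by
  have h : orbitFinset (1 : Perm α) = singleton := by
    funext x
    ext y
    simp [eq_comm]
  rw [orbits, h, card_image_of_injective _ singleton_injective, card_univ]

lemma orbitFinset_mul_eq {π g : Perm α} {x : α} (h : ∀ y, g.SameCycle x y → π y = y) :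
    (π * g).orbitFinset x = g.orbitFinset x := by
  have hpow := pow_apply_eq_of_forall_sameCycle (h := π * g) (fun y hy =>
    h _ (sameCycle_apply_right.2 hy))
  ext z
  simp only [mem_orbitFinset]
  constructor <;> intro hz <;> obtain ⟨i, rfl⟩ := hz.exists_nat_pow_eq
  · rw [hpow]
    exact sameCycle_pow_right.2 (SameCycle.refl _ _)
  · rw [← hpow]
    exact sameCycle_pow_right.2 (SameCycle.refl _ _)

lemma card_orbits_le_card_orbits_mul_add (π g : Perm α) :
    g.orbits.card ≤ (π * g).orbits.card + (π.support.card - 1) := by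
  rcases π.support.eq_empty_or_nonempty with hπ | ⟨s₀, hs₀⟩
  · simp [support_eq_empty_iff.1 hπ]
  set meets : Finset α → Prop := fun t => ∃ a ∈ π.support, a ∈ t
  have hmeet : (g.orbits.filter meets).card ≤ π.support.card := by
    refine card_le_card_of_surjOn g.orbitFinset fun t ht => ?_
    obtain ⟨hto, a, ha, hat⟩ := mem_filter.1 ht
    obtain ⟨y, -, rfl⟩ := mem_image.1 hto
    exact ⟨a, ha, orbitFinset_eq_orbitFinset_iff.2 (mem_orbitFinset.1 hat).symm⟩
  -- an orbit of `g` avoiding `supp π` is an orbit of `π * g` other than that of `s₀`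
  have havoid : g.orbits.filter (¬ meets ·) ⊆
      (π * g).orbits.erase ((π * g).orbitFinset s₀) := by
    intro t ht
    obtain ⟨hto, hav⟩ := mem_filter.1 ht
    obtain ⟨y, -, rfl⟩ := mem_image.1 hto
    have heq : (π * g).orbitFinset y = g.orbitFinset y := orbitFinset_mul_eq fun z hz =>
      notMem_support.1 fun hzπ => hav ⟨z, hzπ, mem_orbitFinset.2 hz⟩
    refine mem_erase.2 ⟨fun hs => hav ⟨s₀, hs₀, ?_⟩, heq ▸ orbitFinset_mem_orbits _ y⟩
    rw [hs, mem_orbitFinset]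
  have hsplit := card_filter_add_card_filter_not (s := g.orbits) meets
  have hle := card_le_card havoid
  rw [card_erase_of_mem (orbitFinset_mem_orbits _ s₀)] at hle
  have hpos := card_pos.2 ⟨_, orbitFinset_mem_orbits (π * g) s₀⟩
  omega

lemma card_le_card_orbits_prod_add_sum (L : List (Perm α)) :
    Fintype.card α ≤ L.prod.orbits.card + (L.map fun g => g.support.card - 1).sum := by
  induction L with
  | nil => simp [card_orbits_one]
  | cons π L ih =>
    have := card_orbits_le_card_orbits_mul_add π L.prod
    simp only [List.prod_cons, List.map_cons, List.sum_cons]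
    omega

lemma card_le_card_orbits_inv_mul_prod_add_sum (P Q : List (Perm α)) (σ : Perm α) :
    Fintype.card α + (σ.support.card - 1) ≤ (σ⁻¹ * (P ++ σ :: Q).prod).orbits.card +
      ((P ++ σ :: Q).map fun g => g.support.card - 1).sum := by
  have hprod : σ⁻¹ * (P ++ σ :: Q).prod = (P.map (MulAut.conj σ⁻¹) ++ Q).prod := by
    simp only [List.prod_append, List.prod_cons, ← map_list_prod, MulAut.conj_apply]
    group
  have hweight : (P.map (MulAut.conj σ⁻¹)).map (fun g => g.support.card - 1) =
      P.map fun g => g.support.card - 1 := by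
    rw [List.map_map]
    refine List.map_congr_left fun g _ => ?_
    simp only [Function.comp_apply, MulAut.conj_apply, card_support_conj]
  have := card_le_card_orbits_prod_add_sum (P.map (MulAut.conj σ⁻¹) ++ Q)
  rw [← hprod, List.map_append, hweight] at this
  simp only [List.map_append, List.map_cons, List.sum_append, List.sum_cons] at this ⊢
  omega

lemma exists_mem_support_sameCycle_inv_mul {σ c : Perm α} (hc : ∀ x y, c.SameCycle x y)
    (hσ : σ.support.Nonempty) (y : α) : ∃ x ∈ σ.support, (σ⁻¹ * c).SameCycle y x := by
  by_contra! h
  obtain ⟨s₀, hs₀⟩ := hσ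
  have horb : (σ * (σ⁻¹ * c)).orbitFinset y = (σ⁻¹ * c).orbitFinset y :=
    orbitFinset_mul_eq fun z hz => notMem_support.1 fun hzσ => h z hzσ hz
  rw [mul_inv_cancel_left] at horb
  have hs₀y := mem_orbitFinset.2 (hc y s₀)
  rw [horb, mem_orbitFinset] at hs₀y
  exact h s₀ hs₀ hs₀y

lemma eq_of_sameCycle_inv_mul {σ c : Perm α} (hc : ∀ x y, c.SameCycle x y)
    (hcard : σ.support.card ≤ (σ⁻¹ * c).orbits.card) :
    ∀ x ∈ σ.support, ∀ y ∈ σ.support, (σ⁻¹ * c).SameCycle x y → x = y := by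
  intro x hx y hy hxy
  have hsurj : Set.SurjOn (σ⁻¹ * c).orbitFinset σ.support (σ⁻¹ * c).orbits := by
    intro t ht
    obtain ⟨z, -, rfl⟩ := mem_image.1 ht
    obtain ⟨a, ha, hza⟩ := exists_mem_support_sameCycle_inv_mul hc ⟨x, hx⟩ z
    exact ⟨a, ha, orbitFinset_eq_orbitFinset_iff.2 hza.symm⟩
  exact injOn_of_surjOn_of_card_le _ (fun z _ => orbitFinset_mem_orbits _ z) hsurj hcard
    hx hy (orbitFinset_eq_orbitFinset_iff.2 hxy)

lemma apply_eq_of_forall_pow_notMem {σ c : Perm α}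
    (hinj : ∀ x ∈ σ.support, ∀ y ∈ σ.support, (σ⁻¹ * c).SameCycle x y → x = y)
    {x y : α} {d : ℕ} (hx : x ∈ σ.support) (hy : y ∈ σ.support) (hd : 0 < d)
    (hdy : (c ^ d) x = y) (hgap : ∀ j, 0 < j → j < d → (c ^ j) x ∉ σ.support) : σ x = y := by
  have hxy : (σ⁻¹ * c).SameCycle x (σ⁻¹ y) :=
    ⟨d, by rw [zpow_natCast, inv_mul_pow_apply hd hgap, hdy]⟩
  have hyσ : σ⁻¹ y ∈ σ.support := by rwa [← support_inv, apply_mem_support, support_inv]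
  rw [hinj x hx _ hyσ hxy]
  simp

end Equiv.Perm

lemma finRotate_pow_apply {n : ℕ} [NeZero n] (j : ℕ) (x : Fin n) :
    (finRotate n ^ j) x = x + j := by
  induction j with
  | zero => simp
  | succ j ih =>
    rw [pow_succ', Equiv.Perm.mul_apply, ih, finRotate_apply, Nat.cast_succ, add_assoc]

lemma sameCycle_finRotate {n : ℕ} [NeZero n] (x y : Fin n) : (finRotate n).SameCycle x y :=
  ⟨((y - x : Fin n) : ℕ), by rw [zpow_natCast, finRotate_pow_apply, Fin.cast_val_eq_self,
    add_sub_cancel]⟩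

lemma exists_finRotate_pow_apply_eq {n : ℕ} [NeZero n] {S : Finset (Fin n)} {x y : Fin n}
    (hxy : x ≠ y) (hy : ∀ z ∈ S, z ≠ x → ((y - x : Fin n) : ℕ) ≤ ((z - x : Fin n) : ℕ)) :
    ∃ d, 0 < d ∧ (finRotate n ^ d) x = y ∧ ∀ j, 0 < j → j < d → (finRotate n ^ j) x ∉ S := by
  refine ⟨(y - x : Fin n), ?_, ?_, fun j hj hjd hjS => ?_⟩
  · simpa [Fin.pos_iff_ne_zero', sub_eq_zero] using hxy.symm
  · rw [finRotate_pow_apply, Fin.cast_val_eq_self, add_sub_cancel]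
  · rw [finRotate_pow_apply] at hjS
    have hval : ((x + j - x : Fin n) : ℕ) = j := by
      rw [add_sub_cancel_left, Fin.val_cast_of_lt (hjd.trans (y - x).isLt)]
    have hne : x + j ≠ x := fun h => by rw [h, sub_self, Fin.val_zero] at hval; omega
    have := hy _ hjS hne
    omega

lemma List.SortedLT.val_formPerm_apply_sub_le {n : ℕ} {s : List (Fin n)} (hs : s.SortedLT)
    {x z : Fin n} (hx : x ∈ s) (hz : z ∈ s) (hzx : z ≠ x) :
    ((s.formPerm x - x : Fin n) : ℕ) ≤ ((z - x : Fin n) : ℕ) := by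
  obtain ⟨i, hi, rfl⟩ := List.getElem_of_mem hx
  obtain ⟨t, ht, rfl⟩ := List.getElem_of_mem hz
  have hti : t ≠ i := fun h => hzx (by simp [h])
  rw [List.formPerm_apply_getElem _ hs.nodup]
  rcases lt_or_ge (i + 1) s.length with hi1 | hi1
  · have hnext : s[i] < s[i + 1] := hs.getElem_lt_getElem_iff.2 (Nat.lt_succ_self i)
    simp only [Nat.mod_eq_of_lt hi1, Fin.sub_val_of_le hnext.le]
    rcases lt_or_gt_of_ne hti with h | h
    · rw [Fin.coe_sub_iff_lt.2 (hs.getElem_lt_getElem_iff.2 h)]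
      have := s[i + 1].isLt
      omega
    · have hle : s[i + 1] ≤ s[t] := hs.getElem_le_getElem_iff.2 h
      rw [Fin.sub_val_of_le (hnext.le.trans hle)]
      rw [Fin.le_def] at hle
      omega
  · have hlast : i + 1 = s.length := by omega
    have hti : t < i := by omega
    simp only [hlast, Nat.mod_self]
    have hfirst : s[0] ≤ s[t] := hs.getElem_le_getElem_iff.2 (Nat.zero_le t)
    rw [Fin.coe_sub_iff_lt.2 (hfirst.trans_lt (hs.getElem_lt_getElem_iff.2 hti)),
      Fin.coe_sub_iff_lt.2 (hs.getElem_lt_getElem_iff.2 hti)]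
    rw [Fin.le_def] at hfirst
    omega

lemma isIncreasingCycle_of_sameCycle_inv_mul_finRotate {n : ℕ} [NeZero n]
    {σ : Equiv.Perm (Fin n)} (hσ : 2 ≤ σ.support.card)
    (hinj : ∀ x ∈ σ.support, ∀ y ∈ σ.support, (σ⁻¹ * finRotate n).SameCycle x y → x = y) :
    IsIncreasingCycle σ := by
  have hs : (σ.support.sort).SortedLT := σ.support.sortedLT_sort
  refine ⟨σ.support.sort, List.sortedLT_iff_pairwise.1 hs, Equiv.ext fun x => ?_⟩
  by_cases hx : x ∈ σ.support
  · have hxs : x ∈ σ.support.sort := (mem_sort _).2 hx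
    have hne : x ≠ (σ.support.sort).formPerm x :=
      ((List.formPerm_apply_mem_ne_self_iff _ hs.nodup x hxs).2
        (by rwa [length_sort])).symm
    obtain ⟨d, hd, hdy, hgap⟩ := exists_finRotate_pow_apply_eq hne
      fun z hz hzx => hs.val_formPerm_apply_sub_le hxs ((mem_sort _).2 hz) hzx
    exact Equiv.Perm.apply_eq_of_forall_pow_notMem hinj hx
      ((mem_sort _).1 (List.formPerm_apply_mem_of_mem hxs)) hd hdy hgap
  · rw [Equiv.Perm.notMem_support.1 hx, List.formPerm_apply_of_notMem (mt (mem_sort _).1 hx)]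

/-- every factor in a minimal factorization of the `n`-cycle
`(1 2 … n)` (realized as `finRotate n`) is an increasing cycle. -/
theorem factor_of_minimal_factorization_increasing (n : ℕ)
    (l : List (Equiv.Perm (Fin n)))
    (hcyc : ∀ σ ∈ l, σ.IsCycle ∧ 2 ≤ σ.support.card)
    (hprod : l.prod = finRotate n)
    (hmin : (l.map fun σ => σ.support.card - 1).sum = n - 1) :
    ∀ σ ∈ l, IsIncreasingCycle σ := by
  intro σ hσ
  have hk : 2 ≤ σ.support.card := (hcyc σ hσ).2
  have hn : 2 ≤ n := hk.trans (σ.support.card_le_univ.trans_eq (Fintype.card_fin n))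
  have : NeZero n := ⟨by omega⟩
  obtain ⟨P, Q, rfl⟩ := List.append_of_mem hσ
  have hcount := Equiv.Perm.card_le_card_orbits_inv_mul_prod_add_sum P Q σ
  rw [hprod, hmin, Fintype.card_fin] at hcount
  exact isIncreasingCycle_of_sameCycle_inv_mul_finRotate hk
    (Equiv.Perm.eq_of_sameCycle_inv_mul sameCycle_finRotate (by omega))
end

section
/- In a minimal factorization σ_m ⋯ σ_1 = (1 2 … n) of the n-cycle, the supports of any two distinct factors σ_i and σ_j intersect in at most one point. -/
/-!
The supports of the factors form a hypergraph on the `n` points which is connected, because the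
product of the factors is an `n`-cycle. A connected hypergraph satisfies `n - 1 ≤ ∑ (|S| - 1)`:
replacing each hyperedge by a star gives a connected graph with at most that many edges. Minimality
makes this an equality, while merging two hyperedges that share `k` points keeps the hypergraph
connected and lowers the sum by `k - 1`; hence `k ≤ 1`.
-/

open Finset SimpleGraph Equiv

variable {α ι κ : Type*}

/-- The 2-section of the hypergraph with hyperedges `S i`. -/
def twoSection (S : ι → Finset α) : SimpleGraph α :=
  SimpleGraph.fromRel fun a b => ∃ i, a ∈ S i ∧ b ∈ S i

lemma twoSection_adj {S : ι → Finset α} {a b : α} :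
    (twoSection S).Adj a b ↔ a ≠ b ∧ ∃ i, a ∈ S i ∧ b ∈ S i := by
  simp only [twoSection, fromRel_adj, and_comm (a := b ∈ _), or_self]

lemma reachable_twoSection_of_mem {S : ι → Finset α} {a b : α} {i : ι}
    (ha : a ∈ S i) (hb : b ∈ S i) : (twoSection S).Reachable a b := by
  rcases eq_or_ne a b with rfl | hab
  · rfl
  · exact (twoSection_adj.2 ⟨hab, i, ha, hb⟩).reachable

lemma twoSection_mono {S : ι → Finset α} {T : κ → Finset α} (h : ∀ i, ∃ k, S i ⊆ T k) :
    twoSection S ≤ twoSection T := by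
  intro a b hab
  obtain ⟨hne, i, ha, hb⟩ := twoSection_adj.1 hab
  obtain ⟨k, hk⟩ := h i
  exact twoSection_adj.2 ⟨hne, k, hk ha, hk hb⟩

namespace SimpleGraph

lemma Connected.of_adj_reachable {G H : SimpleGraph α} (hG : G.Connected)
    (h : ∀ a b, G.Adj a b → H.Reachable a b) : H.Connected := by
  have := hG.nonempty
  refine Connected.mk fun a b => ?_
  have hab := hG a b
  rw [reachable_eq_reflTransGen] at hab h ⊢
  exact hab.lift' id h

end SimpleGraph

theorem card_le_sum_card_sub_one_add_one [Fintype ι] {S : ι → Finset α}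
    (h : (twoSection S).Connected) : Nat.card α ≤ ∑ i, (#(S i) - 1) + 1 := by
  classical
  have := h.nonempty
  have hcentre : ∀ i, ∃ c, ∀ a ∈ S i, c ∈ S i := fun i =>
    (S i).eq_empty_or_nonempty.elim (fun he => ⟨Classical.arbitrary α, by simp [he]⟩)
      fun ⟨a, ha⟩ => ⟨a, fun _ _ => ha⟩
  choose c hc using hcentre
  -- the star of `S i` at the centre `c i` has `|S i| - 1` edges
  set E : Finset (Sym2 α) := univ.biUnion fun i => ((S i).erase (c i)).image fun b => s(c i, b)
  set G := fromEdgeSet (E : Set (Sym2 α))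
  have hreach : ∀ i, ∀ a ∈ S i, G.Reachable (c i) a := by
    intro i a ha
    rcases eq_or_ne (c i) a with rfl | hne
    · rfl
    · refine Adj.reachable ((fromEdgeSet_adj _).2 ⟨?_, hne⟩)
      simp only [E, coe_biUnion, coe_univ, Set.mem_univ, Set.iUnion_true, coe_image, coe_erase,
        Set.mem_iUnion]
      exact ⟨i, a, ⟨ha, hne.symm⟩, rfl⟩
  have hG : G.Connected := h.of_adj_reachable fun a b hab => by
    obtain ⟨-, i, ha, hb⟩ := twoSection_adj.1 hab
    exact (hreach i a ha).symm.trans (hreach i b hb)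
  have hcardE : #E ≤ ∑ i, (#(S i) - 1) := by
    refine card_biUnion_le.trans (sum_le_sum fun i _ => card_image_le.trans ?_)
    rcases (S i).eq_empty_or_nonempty with he | ⟨a, ha⟩
    · simp [he]
    · exact (card_erase_of_mem (hc i a ha)).le
  calc Nat.card α ≤ Nat.card G.edgeSet + 1 := hG.card_vert_le_card_edgeSet_add_one
    _ ≤ #E + 1 := by
      gcongr
      rw [Nat.card_coe_set_eq, ← Set.ncard_coe_finset]
      exact Set.ncard_le_ncard (by simp [G, edgeSet_fromEdgeSet]) E.finite_toSet
    _ ≤ ∑ i, (#(S i) - 1) + 1 := by gcongr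

theorem card_add_card_inter_le [DecidableEq α] [Fintype ι] [DecidableEq ι] {S : ι → Finset α}
    (h : (twoSection S).Connected) {i j : ι} (hij : i ≠ j) :
    Nat.card α + #(S i ∩ S j) ≤ ∑ k, (#(S k) - 1) + 2 := by
  set T := Function.update (Function.update S j ∅) i (S i ∪ S j)
  have hT : (twoSection T).Connected := by
    refine h.mono (twoSection_mono fun k => ?_)
    by_cases hki : k = i
    · exact ⟨i, by simp [T, hki]⟩
    by_cases hkj : k = j
    · exact ⟨i, by simp [T, hkj]⟩
    · exact ⟨k, by simp [T, hki, hkj]⟩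
  have hsplit : ∀ f : ι → ℕ, ∑ k, f k = f i + f j + ∑ k ∈ (univ.erase i).erase j, f k := by
    intro f
    rw [← add_sum_erase _ _ (mem_univ i), ← add_sum_erase _ _ (mem_erase.2 ⟨hij.symm, mem_univ j⟩),
      add_assoc]
  have hrest : ∑ k ∈ (univ.erase i).erase j, (#(T k) - 1) =
      ∑ k ∈ (univ.erase i).erase j, (#(S k) - 1) := by
    refine sum_congr rfl fun k hk => ?_
    obtain ⟨hkj, hki⟩ : k ≠ j ∧ k ≠ i := by simpa using hk
    simp [T, hki, hkj]
  have hTi : T i = S i ∪ S j := by simp [T]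
  have hTj : T j = ∅ := by simp [T, hij.symm]
  have hmerged := card_le_sum_card_sub_one_add_one hT
  rw [hsplit, hrest, hTi, hTj] at hmerged
  rw [hsplit]
  have := card_union_add_card_inter (S i) (S j)
  have := card_le_card (inter_subset_left : S i ∩ S j ⊆ S i)
  simp only [card_empty] at hmerged
  omega

section Perm

variable [DecidableEq α] [Fintype α] {S : ι → Finset α} {l : List (Perm α)}

lemma reachable_twoSection_list_prod_apply (hl : ∀ σ ∈ l, ∃ i, σ.support ⊆ S i) (x : α) :
    (twoSection S).Reachable x (l.prod x) := by
  induction l generalizing x with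
  | nil => rfl
  | cons σ t ih =>
    rw [List.prod_cons, Perm.mul_apply]
    refine (ih (fun τ hτ => hl τ (List.mem_cons_of_mem _ hτ)) x).trans ?_
    by_cases hfix : σ (t.prod x) = t.prod x
    · rw [hfix]
    obtain ⟨i, hi⟩ := hl σ List.mem_cons_self
    have hmem := Perm.mem_support.2 hfix
    exact reachable_twoSection_of_mem (hi hmem) (hi (Perm.apply_mem_support.2 hmem))

lemma connected_twoSection_of_isCycle_list_prod (hl : ∀ σ ∈ l, ∃ i, σ.support ⊆ S i)
    (hcyc : l.prod.IsCycle) (hsupp : l.prod.support = univ) : (twoSection S).Connected := by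
  have : Nonempty α := let ⟨x₀, _⟩ := hcyc; ⟨x₀⟩
  have hpow : ∀ (k : ℕ) x, (twoSection S).Reachable x ((l.prod ^ k) x) := by
    intro k
    induction k with
    | zero => exact fun x => by simp
    | succ k ih =>
      intro x
      rw [pow_succ, Perm.mul_apply]
      exact (reachable_twoSection_list_prod_apply hl x).trans (ih _)
  have hmoved : ∀ x, l.prod x ≠ x := fun x => Perm.mem_support.1 (hsupp ▸ mem_univ x)
  refine Connected.mk fun x y => ?_
  obtain ⟨k, rfl⟩ := hcyc.exists_pow_eq (hmoved x) (hmoved y)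
  exact hpow k x

end Perm

theorem supports_meet_in_at_most_one_point_general (n : ℕ)
    (l : List (Equiv.Perm (Fin n)))
    (hprod : l.prod = finRotate n)
    (hmin : (l.map fun σ => σ.support.card - 1).sum = n - 1) :
    ∀ i j : Fin l.length, i ≠ j →
      ((l.get i).support ∩ (l.get j).support).card ≤ 1 := by
  intro i j hij
  have hle : ((l.get i).support ∩ (l.get j).support).card ≤ n := by
    simpa using card_le_univ ((l.get i).support ∩ (l.get j).support)
  rcases lt_or_ge n 2 with hn | hn
  · omega
  have hconn : (twoSection fun k : Fin l.length => (l.get k).support).Connected := by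
    refine connected_twoSection_of_isCycle_list_prod (l := l) (fun σ hσ => ?_) ?_ ?_
    · obtain ⟨k, rfl⟩ := List.get_of_mem hσ
      exact ⟨k, subset_rfl⟩
    · rw [hprod]; exact isCycle_finRotate_of_le hn
    · rw [hprod]; exact support_finRotate_of_le hn
  have hsum : ∑ k : Fin l.length, (#(l.get k).support - 1) = n - 1 := by
    rw [← hmin, ← Fin.sum_univ_fun_getElem]
    rfl
  have := card_add_card_inter_le hconn hij
  rw [hsum, Nat.card_eq_fintype_card, Fintype.card_fin] at this
  omega

/-- in a minimal factorization of the `n`-cycle `(1 2 … n)`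
(realized as `finRotate n`), the supports of any two distinct factors
intersect in at most one point. -/
theorem supports_meet_in_at_most_one_point (n : ℕ)
    (l : List (Equiv.Perm (Fin n)))
    (hcyc : ∀ σ ∈ l, σ.IsCycle ∧ 2 ≤ σ.support.card)
    (hprod : l.prod = finRotate n)
    (hmin : (l.map fun σ => σ.support.card - 1).sum = n - 1) :
    ∀ i j : Fin l.length, i ≠ j →
      ((l.get i).support ∩ (l.get j).support).card ≤ 1 :=
  supports_meet_in_at_most_one_point_general n l hprod hmin
end

section
/- The formal power series ξ̃(r) defined by ξ̃ = 1 − r ξ̃³ − r² ξ̃⁵ − r³ ξ̃⁷ − ⋯ satisfies the quadratic equation r ξ̃² + ξ̃ − 1 = 0, and hence ξ̃(r) = ∑_{n≥0} (−1)^n C_n r^n where C_n is the n-th Catalan number. -/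
/-!
Since `X ξ̃² = 1 - ξ̃` makes `X^k ξ̃^(2k+1) = (1 - ξ̃)^k ξ̃` a geometric progression, every solution of the
quadratic equation solves the defining equation of `ξ̃`. That equation determines the coefficients of
`ξ̃` recursively, so it has at most one solution; and the Catalan series `C = 1 + X C²`, evaluated
at `-X`, solves the quadratic equation.
-/

open PowerSeries

namespace PowerSeries

variable {R : Type*}

theorem trunc_pow_congr [CommSemiring R] {f g : R⟦X⟧} {n : ℕ} (h : trunc n f = trunc n g)
    (m : ℕ) : trunc n (f ^ m) = trunc n (g ^ m) := by
  rw [← trunc_trunc_pow, h, trunc_trunc_pow]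

theorem coeff_X_pow_mul_congr [Semiring R] {f g : R⟦X⟧} {n k : ℕ} (hk : 0 < k)
    (h : trunc n f = trunc n g) : coeff n (X ^ k * f) = coeff n (X ^ k * g) := by
  rw [coeff_X_pow_mul', coeff_X_pow_mul']
  split_ifs
  · simpa [coeff_trunc, show n - k < n by omega] using congrArg (Polynomial.coeff · (n - k)) h
  · rfl

section XiTilde

variable [CommRing R]

/-- The equation `ξ = 1 - ∑_{k ≥ 1} X^k ξ^(2k+1)`, read in degree `n`, where only `k ≤ n` contributes. -/
def IsXiTilde (ξ : R⟦X⟧) : Prop :=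
  ∀ n : ℕ, coeff n ξ = coeff n 1 - ∑ k ∈ Finset.Icc 1 n, coeff n (X ^ k * ξ ^ (2 * k + 1))

theorem IsXiTilde.trunc_eq {f g : R⟦X⟧} (hf : IsXiTilde f) (hg : IsXiTilde g) (n : ℕ) :
    trunc n f = trunc n g := by
  induction n with
  | zero => simp
  | succ n ih =>
    have hcoeff : coeff n f = coeff n g := by
      rw [hf n, hg n]
      refine congrArg _ (Finset.sum_congr rfl fun k hk => ?_)
      exact coeff_X_pow_mul_congr (Finset.mem_Icc.mp hk).1 (trunc_pow_congr ih _)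
    rw [trunc_succ, trunc_succ, ih, hcoeff]

theorem IsXiTilde.unique {f g : R⟦X⟧} (hf : IsXiTilde f) (hg : IsXiTilde g) : f = g := by
  ext n
  simpa [coeff_trunc] using congrArg (Polynomial.coeff · n) (hf.trunc_eq hg (n + 1))

theorem isXiTilde_of_X_mul_sq_add_self_sub_one {η : R⟦X⟧} (hη : X * η ^ 2 + η - 1 = 0) :
    IsXiTilde η := by
  intro n
  set x := X * η ^ 2 with hx
  have hη' : η = 1 - x := by linear_combination hη
  have hterm (k : ℕ) : X ^ k * η ^ (2 * k + 1) = x ^ k * η := by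
    rw [hx, mul_pow, ← pow_mul]
    ring
  have hsum : ∑ k ∈ Finset.Icc 1 n, X ^ k * η ^ (2 * k + 1) = x - x ^ (n + 1) := by
    simp_rw [hterm, ← Finset.sum_mul, ← Finset.Ico_add_one_right_eq_Icc]
    rw [hη', geom_sum_Ico_mul_neg x (Nat.le_add_left 1 n), pow_one]
  have hvanish : coeff n (x ^ (n + 1)) = 0 := by
    rw [hx, mul_pow, coeff_X_pow_mul']
    simp
  rw [← map_sum, ← map_sub, hsum, show 1 - (x - x ^ (n + 1)) = η + x ^ (n + 1) by rw [hη']; ring,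
    map_add, hvanish, add_zero]

variable (R) in
noncomputable def signedCatalanSeries : R⟦X⟧ :=
  rescale (-1) (map (Nat.castRingHom R) catalanSeries)

theorem coeff_signedCatalanSeries (n : ℕ) :
    coeff n (signedCatalanSeries R) = (-1) ^ n * (catalan n : R) := by
  simp [signedCatalanSeries, coeff_rescale]

theorem X_mul_signedCatalanSeries_sq_add_self_sub_one :
    X * signedCatalanSeries R ^ 2 + signedCatalanSeries R - 1 = 0 := by
  have h := congrArg (fun f => rescale (-1 : R) (map (Nat.castRingHom R) f))
    catalanSeries_sq_mul_X_add_one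
  simp only [map_add, map_mul, map_pow, map_one, map_X, rescale_X, map_neg] at h
  rw [← signedCatalanSeries] at h
  linear_combination -h

end XiTilde

end PowerSeries

/-- if the formal power series `ξ̃ ∈ ℚ[[r]]` satisfies
`ξ̃ = 1 − r ξ̃³ − r² ξ̃⁵ − r³ ξ̃⁷ − ⋯` (stated coefficient-wise; the term
`r^k ξ̃^{2k+1}` has zero coefficient in degree `n` when `k > n`), then
`r ξ̃² + ξ̃ − 1 = 0`, and hence the coefficients of `ξ̃` are the signed
Catalan numbers: `ξ̃ = ∑_{n≥0} (−1)^n C_n r^n`. -/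
theorem xiTilde_quadratic_and_catalan (ξ : PowerSeries ℚ)
    (h : ∀ n : ℕ,
      PowerSeries.coeff (R := ℚ) n ξ =
        PowerSeries.coeff (R := ℚ) n (1 : PowerSeries ℚ) -
        ∑ k ∈ Finset.Icc 1 n,
          PowerSeries.coeff (R := ℚ) n (PowerSeries.X ^ k * ξ ^ (2 * k + 1))) :
    PowerSeries.X * ξ ^ 2 + ξ - 1 = 0 ∧
    ∀ n : ℕ, PowerSeries.coeff (R := ℚ) n ξ = (-1 : ℚ) ^ n * (catalan n : ℚ) := by
  have hξ : ξ = signedCatalanSeries ℚ :=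
    IsXiTilde.unique h (isXiTilde_of_X_mul_sq_add_self_sub_one
      X_mul_signedCatalanSeries_sq_add_self_sub_one)
  subst hξ
  exact ⟨X_mul_signedCatalanSeries_sq_add_self_sub_one, coeff_signedCatalanSeries⟩
end
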